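/- Let E ⊆ ℝ^n be a Lebesgue-measurable set and let f : E → ℝ^m be a measurable mapping such that ap limsup_{x→g} |f(x) − f(g)|/|x − g| < ∞ for almost every point g ∈ E. Then f is approximately differentiable at almost every point of E. -/

import Mathlib

open MeasureTheory Metric Filter Set Function
open scoped Topology ENNReal NNReal

/-- `Y` has density `d` at the point `x` with respect to the measure `μ`. -/
def HasDensityAt {X : Type*} [PseudoMetricSpace X] [MeasurableSpace X]
    (μ : Measure X) (Y : Set X) (x : X) (d : ℝ≥0∞) : Prop :=
  Tendsto (fun r : ℝ => μ (Y ∩ ball x r) / μ (ball x r)) (𝓝[>] (0 : ℝ)) (𝓝 d)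

/-- `L` is an approximate differential of `f` (as a map defined on `E`) at `a`. -/
def IsApproxDifferential {n m : ℕ} (E : Set (EuclideanSpace ℝ (Fin n)))
    (f : EuclideanSpace ℝ (Fin n) → EuclideanSpace ℝ (Fin m))
    (a : EuclideanSpace ℝ (Fin n))
    (L : EuclideanSpace ℝ (Fin n) →ₗ[ℝ] EuclideanSpace ℝ (Fin m)) : Prop :=
  ∀ ε : ℝ, 0 < ε →
    HasDensityAt volume {x ∈ E | ε * ‖x - a‖ < ‖f x - f a - L (x - a)‖} a 0


/-!
Finite approximate upper dilatation at `g` means that for some integer `k` the points `x` of `E`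
with `‖f x - f g‖ > k * ‖x - g‖`, together with `Eᶜ`, fill only a small fraction of every small
ball around `g`. Two such points `x`, `y` at distance `d` then share a point `z ∈ ball y d` that is
good for both, so `‖f x - f y‖ ≤ 3 * k * d`: `f` is Lipschitz on each of countably many pieces
covering almost all of `E`. Extend `f` from a piece to a Lipschitz map on the whole space; by
Rademacher's theorem it is differentiable almost everywhere, and at a density point of the piece
its derivative is an approximate differential of `f`.
-/

open Module

namespace HasDensityAt

variable {X : Type*} [PseudoMetricSpace X] [MeasurableSpace X] {μ : Measure X} {x : X}
  {s t : Set X}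

theorem zero_mono (ht : HasDensityAt μ t x 0) (hst : s ⊆ t) : HasDensityAt μ s x 0 :=
  tendsto_of_tendsto_of_tendsto_of_le_of_le tendsto_const_nhds ht (fun _ => zero_le)
    fun _ => ENNReal.div_le_div_right (measure_mono (inter_subset_inter_left _ hst)) _

theorem union_zero (hs : HasDensityAt μ s x 0) (ht : HasDensityAt μ t x 0) :
    HasDensityAt μ (s ∪ t) x 0 := by
  have hsum := hs.add ht
  rw [add_zero] at hsum
  refine tendsto_of_tendsto_of_tendsto_of_le_of_le tendsto_const_nhds hsum (fun _ => zero_le)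
    fun r => ?_
  rw [union_inter_distrib_right, ← ENNReal.add_div]
  exact ENNReal.div_le_div_right (measure_union_le _ _) _

theorem one_mono (hs : HasDensityAt μ s x 1) {δ : ℝ} (hδ : 0 < δ) (hst : s ∩ ball x δ ⊆ t) :
    HasDensityAt μ t x 1 := by
  refine tendsto_of_tendsto_of_tendsto_of_le_of_le' hs tendsto_const_nhds ?_
    (Eventually.of_forall fun r => ?_)
  · filter_upwards [Ioo_mem_nhdsGT hδ] with r hr
    have hsub : s ∩ ball x r ⊆ t ∩ ball x r := fun y hy =>
      ⟨hst ⟨hy.1, ball_subset_ball hr.2.le hy.2⟩, hy.2⟩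
    exact ENNReal.div_le_div_right (measure_mono hsub) _
  · exact (ENNReal.div_le_div_right (measure_mono inter_subset_right) _).trans
      ENNReal.div_self_le_one

theorem zero_of_compl (hs : MeasurableSet s) (h : HasDensityAt μ sᶜ x 1) :
    HasDensityAt μ s x 0 := by
  have hlim : Tendsto (fun r : ℝ => 1 - μ (sᶜ ∩ ball x r) / μ (ball x r)) (𝓝[>] 0) (𝓝 0) := by
    simpa using ENNReal.Tendsto.sub tendsto_const_nhds h (Or.inl ENNReal.one_ne_top)
  refine tendsto_of_tendsto_of_tendsto_of_le_of_le tendsto_const_nhds hlim (fun _ => zero_le)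
    fun r => ENNReal.le_sub_of_add_le_right ?_ ?_
  · exact ne_top_of_le_ne_top ENNReal.one_ne_top <| (ENNReal.div_le_div_right
      (measure_mono inter_subset_right) _).trans ENNReal.div_self_le_one
  · rw [ENNReal.div_add_div_same, inter_comm s, inter_comm sᶜ, ← sdiff_eq,
      measure_inter_add_sdiff _ hs]
    exact ENNReal.div_self_le_one

end HasDensityAt

theorem nonempty_inter_of_measure_compl_add_lt {α : Type*} [MeasurableSpace α] {μ : Measure α}
    {s t U V : Set α} (hVU : V ⊆ U) (h : μ (sᶜ ∩ U) + μ (tᶜ ∩ V) < μ V) :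
    (s ∩ t ∩ V).Nonempty := by
  by_contra! hempty
  refine h.not_ge ((measure_mono fun z hz => ?_).trans (measure_union_le _ _))
  by_cases hzs : z ∈ s
  · exact Or.inr ⟨fun hzt => eq_empty_iff_forall_notMem.1 hempty z ⟨⟨hzs, hzt⟩, hz⟩, hz⟩
  · exact Or.inl ⟨hzs, hVU hz⟩

section AddHaar

variable {X : Type*} [NormedAddCommGroup X] [NormedSpace ℝ X] [FiniteDimensional ℝ X]
  [MeasurableSpace X] [BorelSpace X] (μ : Measure X) [μ.IsAddHaarMeasure]

theorem ae_hasDensityAt_one (s : Set X) : ∀ᵐ x ∂μ, x ∈ s → HasDensityAt μ s x 1 := by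
  filter_upwards [ae_imp_of_ae_restrict (Besicovitch.ae_tendsto_measure_inter_div μ s)]
    with x hx hxs
  refine (hx hxs).congr' ?_
  filter_upwards [self_mem_nhdsWithin] with r (hr : 0 < r)
  have hball : closedBall x r =ᵐ[μ] ball x r := by
    refine ae_eq_set.2 ⟨?_, by simp [sdiff_eq_empty.2 ball_subset_closedBall]⟩
    rw [closedBall_sdiff_ball]
    exact Measure.addHaar_sphere_of_ne_zero μ x hr.ne'
  rw [measure_congr hball, measure_congr ((ae_eq_refl s).inter hball)]

theorem MeasureTheory.Measure.addHaar_ball_two_mul (x y : X) {r : ℝ} (hr : 0 < r) :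
    μ (ball x (2 * r)) = 2 ^ finrank ℝ X * μ (ball y r) := by
  rw [Measure.addHaar_ball_of_pos μ x (by positivity), Measure.addHaar_ball_of_pos μ y hr, mul_pow,
    ENNReal.ofReal_mul (by positivity), ENNReal.ofReal_pow zero_le_two, mul_assoc]
  norm_num

theorem LipschitzOnWith.exists_eqOn_ae_differentiableAt {Y : Type*} [NormedAddCommGroup Y]
    [NormedSpace ℝ Y] [FiniteDimensional ℝ Y] {f : X → Y} {K : ℝ≥0} {s : Set X}
    (hf : LipschitzOnWith K f s) :
    ∃ F : X → Y, EqOn f F s ∧ ∀ᵐ x ∂μ, DifferentiableAt ℝ F x := by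
  obtain ⟨F, hF, hfF⟩ := hf.extend_finite_dimension
  exact ⟨F, hfF, hF.ae_differentiableAt⟩

end AddHaar

section Slopes

variable {X Y : Type*} [NormedAddCommGroup X] [NormedAddCommGroup Y]

def lowSlopeSet (E : Set X) (f : X → Y) (g : X) (k : ℝ≥0) : Set X :=
  {x ∈ E | ‖f x - f g‖ ≤ k * ‖x - g‖}

variable {E : Set X} {f : X → Y}

theorem compl_lowSlopeSet_subset {g : X} {s : ℝ} {k : ℝ≥0} (hsk : s ≤ k) :
    (lowSlopeSet E f g k)ᶜ ⊆ Eᶜ ∪ {x ∈ E | s < ‖f x - f g‖ / ‖x - g‖} := by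
  intro x hx
  by_cases hxE : x ∈ E
  · have hlt : k * ‖x - g‖ < ‖f x - f g‖ := not_le.1 fun h => hx ⟨hxE, h⟩
    have hxg : 0 < ‖x - g‖ := by
      refine norm_pos_iff.2 (sub_ne_zero.2 ?_)
      rintro rfl
      simp at hlt
    exact Or.inr ⟨hxE, hsk.trans_lt ((lt_div_iff₀ hxg).2 hlt)⟩
  · exact Or.inl hxE

variable [NormedSpace ℝ X] [MeasurableSpace X] (μ : Measure X)

/-- The constant is chosen so that, for `r = ‖x - y‖`, the exceptional parts of `ball x (2 * r)`
and of `ball y r` cannot cover `ball y r`, as `μ (ball x (2 * r)) = 2 ^ finrank ℝ X * μ (ball y r)`.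
-/
def goodSet (E : Set X) (f : X → Y) (k : ℝ≥0) (ρ : ℝ) : Set X :=
  {g | ∀ r ∈ Ioo 0 ρ,
    μ ((lowSlopeSet E f g k)ᶜ ∩ ball g r) < (2 * 2 ^ finrank ℝ X)⁻¹ * μ (ball g r)}

variable [FiniteDimensional ℝ X] [μ.IsAddHaarMeasure]

theorem exists_mem_goodSet {g : X} {k : ℝ≥0} (h : HasDensityAt μ (lowSlopeSet E f g k)ᶜ g 0) :
    ∃ j : ℕ, g ∈ goodSet μ E f k (1 / (j + 1)) := by
  have hc : (0 : ℝ≥0∞) < (2 * 2 ^ finrank ℝ X)⁻¹ := ENNReal.inv_pos.2 (by finiteness)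
  obtain ⟨δ, hδ, hδsub⟩ := mem_nhdsGT_iff_exists_Ioo_subset.1 (h.eventually_lt_const hc)
  obtain ⟨j, hj⟩ := exists_nat_one_div_lt (mem_Ioi.1 hδ)
  refine ⟨j, fun r hr => ?_⟩
  exact (ENNReal.div_lt_iff (Or.inl (measure_ball_pos μ g hr.1).ne')
    (Or.inl measure_ball_lt_top.ne)).1 (hδsub ⟨hr.1, hr.2.trans hj⟩)

variable [BorelSpace X]

theorem exists_mem_lowSlopeSet_inter {k : ℝ≥0} {ρ : ℝ} {x y : X} (hx : x ∈ goodSet μ E f k ρ)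
    (hy : y ∈ goodSet μ E f k ρ) (hd : 0 < dist x y) (hρ : 2 * dist x y < ρ) :
    (lowSlopeSet E f x k ∩ lowSlopeSet E f y k ∩ ball y (dist x y)).Nonempty := by
  set d := dist x y
  set V := μ (ball y d)
  have h2n0 : (2 : ℝ≥0∞) ^ finrank ℝ X ≠ 0 := by simp
  have h2ntop : (2 : ℝ≥0∞) ^ finrank ℝ X ≠ ∞ := by simp
  have hc : (2 * 2 ^ finrank ℝ X : ℝ≥0∞)⁻¹ * 2 ^ finrank ℝ X = 2⁻¹ := by
    rw [ENNReal.mul_inv (by simp) (by simp), mul_assoc, ENNReal.inv_mul_cancel h2n0 h2ntop, mul_one]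
  have hc' : (2 * 2 ^ finrank ℝ X : ℝ≥0∞)⁻¹ ≤ 2⁻¹ := by
    rw [← hc]
    exact le_mul_of_one_le_right zero_le (one_le_pow_of_one_le' one_le_two _)
  have hbx := hx (2 * d) ⟨by positivity, hρ⟩
  rw [Measure.addHaar_ball_two_mul μ x y hd, ← mul_assoc, hc] at hbx
  have hby := (hy d ⟨hd, by linarith⟩).trans_le (mul_le_mul_left hc' V)
  have hsub : ball y d ⊆ ball x (2 * d) := ball_subset_ball' (by rw [dist_comm]; linarith)
  refine nonempty_inter_of_measure_compl_add_lt (μ := μ) hsub ?_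
  calc _ < 2⁻¹ * V + 2⁻¹ * V := ENNReal.add_lt_add hbx hby
    _ = V := by rw [← add_mul, ENNReal.inv_two_add_inv_two, one_mul]

theorem lipschitzOnWith_goodSet_inter_ball (k : ℝ≥0) (ρ : ℝ) (q : X) :
    LipschitzOnWith (3 * k) f (goodSet μ E f k ρ ∩ ball q (ρ / 4)) := by
  refine LipschitzOnWith.of_dist_le_mul fun x hx y hy => ?_
  rcases eq_or_ne x y with rfl | hxy
  · simp
  have hd : 0 < dist x y := dist_pos.2 hxy
  have hρ : 2 * dist x y < ρ := by
    linarith [dist_triangle_right x y q, mem_ball.1 hx.2, mem_ball.1 hy.2]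
  obtain ⟨z, ⟨hzx, hzy⟩, hz⟩ := exists_mem_lowSlopeSet_inter μ hx.1 hy.1 hd hρ
  have hzx' : dist z x ≤ 2 * dist x y := by
    linarith [dist_triangle z y x, dist_comm x y, mem_ball.1 hz]
  calc dist (f x) (f y) ≤ ‖f z - f x‖ + ‖f z - f y‖ := by
        simpa only [dist_eq_norm] using dist_triangle_left (f x) (f y) (f z)
    _ ≤ k * ‖z - x‖ + k * ‖z - y‖ := add_le_add hzx.2 hzy.2
    _ ≤ k * (2 * dist x y) + k * dist x y := by
        rw [← dist_eq_norm, ← dist_eq_norm]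
        gcongr
        exact (mem_ball.1 hz).le
    _ = (3 * k : ℝ≥0) * dist x y := by push_cast; ring

theorem ae_exists_mem_goodSet_inter_ball (hE : MeasurableSet E)
    (hap : ∀ᵐ g ∂μ, g ∈ E → ∃ s : ℝ, HasDensityAt μ {x ∈ E | s < ‖f x - f g‖ / ‖x - g‖} g 0)
    {c : Set X} (hc : Dense c) :
    ∀ᵐ g ∂μ, g ∈ E → ∃ k j : ℕ, ∃ q ∈ c,
      g ∈ goodSet μ E f k (1 / (j + 1)) ∩ ball q (1 / (j + 1) / 4) := by
  filter_upwards [hap, ae_hasDensityAt_one μ E] with g hg hEg hgE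
  obtain ⟨s, hs⟩ := hg hgE
  have hcompl : HasDensityAt μ Eᶜ g 0 :=
    HasDensityAt.zero_of_compl hE.compl (by rw [compl_compl]; exact hEg hgE)
  have hlow : HasDensityAt μ (lowSlopeSet E f g ⌈s⌉₊)ᶜ g 0 :=
    (hcompl.union_zero hs).zero_mono (compl_lowSlopeSet_subset (by simpa using Nat.le_ceil s))
  obtain ⟨j, hj⟩ := exists_mem_goodSet μ hlow
  obtain ⟨q, hq, hgq⟩ := hc.exists_dist_lt g (by positivity : (0 : ℝ) < 1 / (j + 1) / 4)
  exact ⟨_, j, q, hq, hj, mem_ball.2 hgq⟩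

end Slopes

theorem isApproxDifferential_of_eqOn {n m : ℕ} {E : Set (EuclideanSpace ℝ (Fin n))}
    (hE : MeasurableSet E) {f F : EuclideanSpace ℝ (Fin n) → EuclideanSpace ℝ (Fin m)}
    (hf : Measurable fun x : E => f x) {P : Set (EuclideanSpace ℝ (Fin n))}
    {a : EuclideanSpace ℝ (Fin n)} (hfF : EqOn f F P) (ha : a ∈ P)
    (hP : HasDensityAt volume P a 1) (hF : DifferentiableAt ℝ F a) :
    IsApproxDifferential E f a (fderiv ℝ F a : _ →ₗ[ℝ] _) := by
  intro ε hε
  have hS : MeasurableSet {x ∈ E | ε * ‖x - a‖ < ‖f x - f a - fderiv ℝ F a (x - a)‖} := by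
    have hdiff : Measurable fun x : E => ‖f x - f a - fderiv ℝ F a (x - a)‖ :=
      ((hf.sub_const _).sub ((fderiv ℝ F a).continuous.measurable.comp
        (measurable_subtype_coe.sub_const a))).norm
    convert hE.subtype_image (measurableSet_lt
      (f := fun x : E => ε * ‖(x : EuclideanSpace ℝ (Fin n)) - a‖) (by fun_prop) hdiff) using 1
    exact (Subtype.image_preimage_coe E _).symm
  obtain ⟨δ, hδ, hFa⟩ := Metric.eventually_nhds_iff.1 (hF.hasFDerivAt.isLittleO.def hε)
  refine HasDensityAt.zero_of_compl hS (hP.one_mono hδ fun x hx hxS => ?_)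
  rw [mem_ofPred_eq, hfF hx.1, hfF ha] at hxS
  exact hxS.2.not_ge (hFa (mem_ball.1 hx.2))

/-- A measurable mapping whose approximate upper dilatation is finite at almost every
point of `E` is approximately differentiable almost everywhere in `E`. -/
theorem approx_differentiable_of_ap_limsup_lt_top {n m : ℕ}
    (E : Set (EuclideanSpace ℝ (Fin n))) (hE : MeasurableSet E)
    (f : EuclideanSpace ℝ (Fin n) → EuclideanSpace ℝ (Fin m))
    (hf : Measurable (fun x : E => f x))
    (hap : ∀ᵐ g ∂volume, g ∈ E → ∃ s : ℝ,
      HasDensityAt volume {x ∈ E | s < ‖f x - f g‖ / ‖x - g‖} g 0) :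
    ∀ᵐ a ∂volume, a ∈ E →
      ∃ L : EuclideanSpace ℝ (Fin n) →ₗ[ℝ] EuclideanSpace ℝ (Fin m),
        IsApproxDifferential E f a L := by
  obtain ⟨c, hc, hcd⟩ := TopologicalSpace.exists_countable_dense (EuclideanSpace ℝ (Fin n))
  set P : ℕ → ℕ → EuclideanSpace ℝ (Fin n) → Set (EuclideanSpace ℝ (Fin n)) :=
    fun k j q => goodSet volume E f k (1 / (j + 1)) ∩ ball q (1 / (j + 1) / 4)
  have hF k j q : ∃ F : EuclideanSpace ℝ (Fin n) → EuclideanSpace ℝ (Fin m),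
      EqOn f F (P k j q) ∧ ∀ᵐ a ∂volume, DifferentiableAt ℝ F a :=
    (lipschitzOnWith_goodSet_inter_ball volume _ _ q).exists_eqOn_ae_differentiableAt volume
  choose F hfF hFdiff using hF
  have hPdens : ∀ᵐ a ∂volume, ∀ k j, ∀ q ∈ c, a ∈ P k j q → HasDensityAt volume (P k j q) a 1 := by
    simp only [ae_all_iff, ae_ball_iff hc]
    exact fun k j q _ => ae_hasDensityAt_one volume _
  have hFdiff' : ∀ᵐ a ∂volume, ∀ k j, ∀ q ∈ c, DifferentiableAt ℝ (F k j q) a := by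
    simp only [ae_all_iff, ae_ball_iff hc]
    exact fun k j q _ => hFdiff k j q
  filter_upwards [ae_exists_mem_goodSet_inter_ball volume hE hap hcd, hPdens, hFdiff']
    with a hcover hdens hdiff haE
  obtain ⟨k, j, q, hq, haP⟩ := hcover haE
  exact ⟨_, isApproxDifferential_of_eqOn hE hf (hfF k j q) haP (hdens k j q hq haP)
    (hdiff k j q hq)⟩
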